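/- Let R be a nested collection of measurable subsets of positive measure of a probability space (Ω, F, P) with finite Carleson constant [[R]] < ∞, and set M = ⌊4[[R]] + 1⌋. Then there exist pairwise disjoint families R_0, R_1, …, R_{M−1} such that R = R_0 ∪ R_1 ∪ … ∪ R_{M−1} and, for every j ∈ {0, …, M−1} and every A ∈ R_j, ∑_{J ∈ G_1(R_j, A)} P(J) ≤ P(A)/2. -/

import Mathlib

open MeasureTheory ENNReal

noncomputable section

namespace Paper

/-- A filtered atomic probability space structure on `(Ω, m0, P)`:
an increasing sequence of finite measurable partitions `part n` of `Ω` into atoms of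
positive measure (with `part 0 = {univ}`, so that the `0`-th σ-algebra is trivial),
generating the ambient σ-algebra, together with a choice `star n A` of a child of
maximal measure for every atom `A` of `part n`. -/
structure FilteredAtomic (Ω : Type*) [m0 : MeasurableSpace Ω] (P : Measure Ω) where
  part : ℕ → Finset (Set Ω)
  part_zero : part 0 = {Set.univ}
  meas : ∀ n, ∀ A ∈ part n, MeasurableSet A
  pos : ∀ n, ∀ A ∈ part n, 0 < P A
  disj : ∀ n, (part n : Set (Set Ω)).PairwiseDisjoint id
  cover : ∀ n, ⋃₀ (part n : Set (Set Ω)) = Set.univ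
  refined : ∀ n, ∀ A ∈ part (n + 1), ∃ B ∈ part n, A ⊆ B
  gen : m0 = ⨆ n, MeasurableSpace.generateFrom (part n : Set (Set Ω))
  star : ℕ → Set Ω → Set Ω
  star_mem : ∀ n, ∀ A ∈ part n, star n A ∈ part (n + 1)
  star_sub : ∀ n, ∀ A ∈ part n, star n A ⊆ A
  star_max : ∀ n, ∀ A ∈ part n, ∀ B ∈ part (n + 1), B ⊆ A → P B ≤ P (star n A)

variable {Ω : Type*} [m0 : MeasurableSpace Ω] {P : Measure Ω}

/-- The filtration `F_n` generated by the atoms of the `n`-th partition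
(`F_0` is the trivial σ-algebra since `part 0 = {univ}`). -/
def FilteredAtomic.filt (F : FilteredAtomic Ω P) (n : ℕ) : MeasurableSpace Ω :=
  MeasurableSpace.generateFrom (F.part n : Set (Set Ω))

/-- The collection 𝒜 of all atoms. -/
def FilteredAtomic.atoms (F : FilteredAtomic Ω P) : Set (Set Ω) :=
  ⋃ n, (F.part n : Set (Set Ω))

/-- The collection 𝒞 = {star A : A ∈ 𝒜}. -/
def FilteredAtomic.starSets (F : FilteredAtomic Ω P) : Set (Set Ω) :=
  {B | ∃ n, ∃ A ∈ F.part n, B = F.star n A}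

/-- The collection ℰ = 𝒜 \ 𝒞. -/
def FilteredAtomic.eColl (F : FilteredAtomic Ω P) : Set (Set Ω) :=
  F.atoms \ F.starSets

/-- The collection ℬ = {Ã : A ∈ 𝒜, P(Ã) > 0}, where Ã = A \ star A. -/
def FilteredAtomic.bColl (F : FilteredAtomic Ω P) : Set (Set Ω) :=
  {S | (∃ n, ∃ A ∈ F.part n, S = A \ F.star n A) ∧ 0 < P S}

/-- The Carleson constant [[R]] of a collection of sets. -/
def carleson (P : Measure Ω) (R : Set (Set Ω)) : ℝ≥0∞ :=
  ⨆ I ∈ R, (P I)⁻¹ * ∑' J : {J : Set Ω // J ∈ R ∧ J ⊆ I}, P (J : Set Ω)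

/-- A collection is nested if any two members are disjoint or comparable. -/
def Nested (R : Set (Set Ω)) : Prop :=
  ∀ A ∈ R, ∀ B ∈ R, (A ∩ B).Nonempty → A ⊆ B ∨ B ⊆ A

/-- `G1 R A`: the maximal members of `R` strictly contained in `A`. -/
def G1 (R : Set (Set Ω)) (A : Set Ω) : Set (Set Ω) :=
  {B | B ∈ R ∧ B ⊂ A ∧ ∀ C ∈ R, C ⊂ A → B ⊆ C → B = C}

/-- `Gk R k A`: the `k`-th generation of `R` inside `A`. -/
def Gk (R : Set (Set Ω)) : ℕ → Set Ω → Set (Set Ω)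
  | 0, A => {A}
  | k + 1, A => ⋃ J ∈ Gk R k A, G1 R J

/-- Martingale difference `E[f|F_{n+1}] - E[f|F_n]`; with the present indexing this is the
paper's `Δ_{n+1} f`, so `fun n => F.mdiff f n` enumerates `Δ_1 f, Δ_2 f, …`. -/
def FilteredAtomic.mdiff (F : FilteredAtomic Ω P) {X : Type*} [NormedAddCommGroup X]
    [NormedSpace ℝ X] [CompleteSpace X] (f : Ω → X) (n : ℕ) : Ω → X :=
  P[f|F.filt (n + 1)] - P[f|F.filt n]

/-- `(‖E f‖^p + ∑_{n ≥ 1} ‖E[f|F_n] - E[f|F_{n-1}]‖_{L^p}^p)^{1/p}` as an `ℝ≥0∞` number. -/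
def FilteredAtomic.mtBound (F : FilteredAtomic Ω P) {X : Type*} [NormedAddCommGroup X]
    [NormedSpace ℝ X] [CompleteSpace X] (f : Ω → X) (p : ℝ) : ℝ≥0∞ :=
  ((‖∫ ω, f ω ∂P‖₊ : ℝ≥0∞) ^ p +
    ∑' n : ℕ, eLpNorm (F.mdiff f n) (ENNReal.ofReal p) P ^ p) ^ (1 / p)

/-- `M` is a scalar martingale type `p` constant for the filtered space. -/
def ScalarMT (F : FilteredAtomic Ω P) (p M : ℝ) : Prop :=
  1 ≤ M ∧ ∀ g : Ω → ℝ, MemLp g (ENNReal.ofReal p) P →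
    eLpNorm g (ENNReal.ofReal p) P ≤ ENNReal.ofReal M * F.mtBound g p

/-- The dyadic interval `[k/2^n, (k+1)/2^n) ⊆ [0,1)` (for `k < 2^n`). -/
def dyadic (n k : ℕ) : Set ℝ := Set.Ico ((k : ℝ) / 2 ^ n) (((k : ℝ) + 1) / 2 ^ n)

/-- The Haar function `h_I = 1_{I⁺} - 1_{I⁻}` of the dyadic interval `I = [k/2^n, (k+1)/2^n)`. -/
def haarFn (n k : ℕ) : ℝ → ℝ :=
  (dyadic (n + 1) (2 * k)).indicator 1 - (dyadic (n + 1) (2 * k + 1)).indicator 1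

/-- `X` has Haar type `p` with constant `C`: for every finitely supported family of vectors
indexed by dyadic subintervals of `[0,1)` (encoded as pairs `(n,k)` with `k < 2^n`),
`‖∑ x_I h_I‖_{L^p([0,1);X)} ≤ C (∑ ‖x_I‖^p |I|)^{1/p}`. -/
def HaarTypeWith (X : Type*) [NormedAddCommGroup X] [NormedSpace ℝ X] (p C : ℝ) : Prop :=
  ∀ s : Finset (ℕ × ℕ), (∀ q ∈ s, q.2 < 2 ^ q.1) → ∀ x : ℕ × ℕ → X,
    (∫ t in Set.Ico (0 : ℝ) 1, ‖∑ q ∈ s, haarFn q.1 q.2 t • x q‖ ^ p) ^ (1 / p) ≤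
      C * (∑ q ∈ s, ‖x q‖ ^ p * ((2 : ℝ) ^ q.1)⁻¹) ^ (1 / p)

/-- The order `≺` on atoms: earlier generation first, and within a generation larger
measure first. -/
def Prec (F : FilteredAtomic Ω P) (B₁ B₂ : Set Ω) : Prop :=
  ∃ l m : ℕ, B₁ ∈ F.part l ∧ B₂ ∈ F.part m ∧ (l < m ∨ (l = m ∧ P B₂ < P B₁))

/-- `U_j = {B ∈ G_1(ℰ, Y_{j-1}) : B ≺ Y_j}`. -/
def Uset (F : FilteredAtomic Ω P) (Y : ℕ → Set Ω) (j : ℕ) : Set (Set Ω) :=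
  {B | B ∈ G1 F.eColl (Y (j - 1)) ∧ Prec F B (Y j)}

/-- The sequence `Y` satisfies condition `D_m(A)`. -/
def CondD (F : FilteredAtomic Ω P) (A : Set Ω) (Y : ℕ → Set Ω) (m : ℕ) : Prop :=
  Y 0 = A ∧ (∀ j ∈ Finset.Icc 1 m, Y j ∈ G1 F.eColl (Y (j - 1))) ∧
    ∑ j ∈ Finset.Icc 1 m, P (⋃₀ Uset F Y j) ≤ 2⁻¹ * P A ∧
    2⁻¹ * P A ≤ P (Y m) + ∑ j ∈ Finset.Icc 1 m, P (⋃₀ Uset F Y j)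

/-- The collection ℰ supports all initial segments of a generalized Haar system with
constant `K`.  Dyadic intervals in `𝒟_n` are encoded as pairs `(j,k)`, `j ≤ n`, `k < 2^j`,
corresponding to `[k/2^j, (k+1)/2^j)`; `ε = δ·2^{-n-1}`. -/
def SupportsHaar (F : FilteredAtomic Ω P) (K : ℝ) : Prop :=
  0 < K ∧ ∀ (n : ℕ) (δ : ℝ), 0 < δ →
    ∃ (C : ℕ × ℕ → Set (Set Ω)) (g : ℕ × ℕ → Ω → ℝ) (A0 : Set Ω) (S : ℕ),
      A0 ∈ F.eColl ∧
      -- (A1)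
      C (0, 0) = {A0} ∧
      -- (A2)
      (∀ j k, j ≤ n → k < 2 ^ j → C (j, k) ⊆ {A | A ∈ F.eColl ∧ A ⊆ A0}) ∧
      -- (A3)
      (∀ j k, j ≤ n → k < 2 ^ j → (C (j, k)).PairwiseDisjoint id) ∧
      -- (A4)
      (∀ j k l i, j ≤ n → k < 2 ^ j → l ≤ n → i < 2 ^ l →
        ((⋃₀ C (j, k) ⊆ ⋃₀ C (l, i) ↔ dyadic j k ⊆ dyadic l i) ∧
          ((⋃₀ C (j, k) ∩ ⋃₀ C (l, i)).Nonempty ↔ (dyadic j k ∩ dyadic l i).Nonempty))) ∧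
      -- (A5)
      (∀ j k, j + 1 ≤ n → k < 2 ^ j →
        (∀ ω, g (j, k) ω ∈ Set.Icc (-1 : ℝ) 1) ∧
        Function.support (g (j, k)) ⊆ ⋃₀ C (j, k) ∧
        ⋃₀ C (j + 1, 2 * k) ⊆ {ω | g (j, k) ω = 1} ∧
        ⋃₀ C (j + 1, 2 * k + 1) ⊆ {ω | g (j, k) ω = -1}) ∧
      -- (A6)
      (∀ j k, j ≤ n → k < 2 ^ j → ∀ A ∈ C (j, k), MeasurableSet[F.filt S] A) ∧
      -- (A7)
      (∀ j k, j + 1 ≤ n → k < 2 ^ j → Measurable[F.filt S] (g (j, k))) ∧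
      -- (A8)
      (∀ A ∈ F.part S, ∀ m, 1 ≤ m → m ≤ S →
        ∀ j k j' k', j + 1 ≤ n → k < 2 ^ j → j' + 1 ≤ n → k' < 2 ^ j' →
          ¬ F.mdiff (g (j, k)) (m - 1) =ᵐ[P.restrict A] (0 : Ω → ℝ) →
          ¬ F.mdiff (g (j', k')) (m - 1) =ᵐ[P.restrict A] (0 : Ω → ℝ) →
          (j, k) = (j', k')) ∧
      -- (A9)
      (∀ j k, j + 1 ≤ n → k < 2 ^ j →
        ∑' i : ℕ, eLpNorm (F.mdiff (g (j, k)) i) 1 P ≤ ENNReal.ofReal K * P (⋃₀ C (j, k))) ∧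
      -- (A10)
      (∀ j k, j ≤ n → k < 2 ^ j →
        ENNReal.ofReal (((2 : ℝ) ^ j)⁻¹ - 2 * (δ * ((2 : ℝ) ^ (n + 1))⁻¹)) * P A0 ≤
            P (⋃₀ C (j, k)) ∧
          P (⋃₀ C (j, k)) ≤ ENNReal.ofReal (((2 : ℝ) ^ j)⁻¹) * P A0)

end Paper

/-!
The depth of `X ∈ R` is the number of members of `R` containing `X`. It is finite: these
ancestors form a chain, so any `n` of them have total measure at most `[[R]]`, while each has
measure at least `P X`. Split `R` into the classes `R_i` of members of depth `≡ i (mod M)`.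
For `J ∈ G_1(R_i, A)` the depths of `J` and `A` differ by a positive multiple of `M`, so at
least `M` members of `R` lie between `J` (included) and `A` (excluded). The members of
`G_1(R_i, A)` are disjoint, hence `M ∑_J P(J) ≤ ∑_{B ∈ R, B ⊆ A} P(B) ≤ [[R]] P(A)`, and
`M > 2[[R]]` gives the bound `P(A)/2`.
-/

namespace Paper

open MeasureTheory ENNReal

section Nested

variable {Ω : Type*} {R : Set (Set Ω)}

def ancestors (R : Set (Set Ω)) (X : Set Ω) : Set (Set Ω) := {B | B ∈ R ∧ X ⊆ B}

-- `ncard` is `0` on infinite sets; the ancestors are finite when `[[R]] < ∞`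
-- (`Nested.finite_ancestors`).
def depth (R : Set (Set Ω)) (X : Set Ω) : ℕ := (ancestors R X).ncard

lemma Nested.mono {R' : Set (Set Ω)} (hR : Nested R) (h : R' ⊆ R) : Nested R' :=
  fun A hA B hB => hR A (h hA) B (h hB)

lemma Nested.pairwiseDisjoint_G1 (hR : Nested R) (A : Set Ω) : (G1 R A).PairwiseDisjoint id := by
  intro J hJ J' hJ' hne
  by_contra hmeet
  rcases hR J hJ.1 J' hJ'.1 (Set.not_disjoint_iff_nonempty_inter.1 hmeet) with h | h
  · exact hne (hJ.2.2 J' hJ'.1 hJ'.2.1 h)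
  · exact hne (hJ'.2.2 J hJ.1 hJ.2.1 h).symm

lemma Nested.exists_forall_subset (hR : Nested R) {X : Set Ω} (hX : X.Nonempty)
    {t : Finset (Set Ω)} (ht : t.Nonempty) (htR : ∀ B ∈ t, B ∈ ancestors R X) :
    ∃ Bₘ ∈ t, ∀ B ∈ t, B ⊆ Bₘ := by
  obtain ⟨Bₘ, hBₘ, hmax⟩ := t.exists_maximal ht
  refine ⟨Bₘ, hBₘ, fun B hB => ?_⟩
  obtain ⟨x, hx⟩ := hX
  rcases hR B (htR B hB).1 Bₘ (htR Bₘ hBₘ).1 ⟨x, (htR B hB).2 hx, (htR Bₘ hBₘ).2 hx⟩ with h | h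
  · exact h
  · exact hmax hB h

lemma Nested.ancestors_diff_subset (hR : Nested R) {J A : Set Ω} (hJ : J.Nonempty) (hA : A ∈ R)
    (hJA : J ⊆ A) : ancestors R J \ ancestors R A ⊆ {B | (B ∈ R ∧ B ⊆ A) ∧ J ⊆ B} := by
  rintro B ⟨⟨hBR, hJB⟩, hAB⟩
  obtain ⟨x, hx⟩ := hJ
  rcases hR B hBR A hA ⟨x, hJB hx, hJA hx⟩ with h | h
  · exact ⟨⟨hBR, h⟩, hJB⟩
  · exact absurd ⟨hBR, h⟩ hAB

lemma depth_lt_depth_of_ssubset {J A : Set Ω} (hJ : J ∈ R) (hJA : J ⊂ A)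
    (hfin : (ancestors R J).Finite) : depth R A < depth R J := by
  refine Set.ncard_lt_ncard ⟨fun B hB => ⟨hB.1, hJA.subset.trans hB.2⟩, fun h => ?_⟩ hfin
  exact hJA.not_subset (h ⟨hJ, subset_rfl⟩).2

lemma Nested.le_encard_of_depth_modEq (hR : Nested R) {M : ℕ} {J A : Set Ω}
    (hJ : J ∈ R) (hJne : J.Nonempty) (hA : A ∈ R) (hJA : J ⊂ A)
    (hfin : (ancestors R J).Finite) (hmod : depth R J ≡ depth R A [MOD M]) :
    (M : ℕ∞) ≤ {B | (B ∈ R ∧ B ⊆ A) ∧ J ⊆ B}.encard := by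
  have hsub : ancestors R A ⊆ ancestors R J := fun B hB => ⟨hB.1, hJA.subset.trans hB.2⟩
  have hlt := depth_lt_depth_of_ssubset hJ hJA hfin
  have hdvd : M ∣ depth R J - depth R A := (Nat.modEq_iff_dvd' hlt.le).mp hmod.symm
  calc (M : ℕ∞) ≤ (depth R J - depth R A : ℕ) := by
        exact_mod_cast Nat.le_of_dvd (Nat.sub_pos_of_lt hlt) hdvd
    _ = (ancestors R J \ ancestors R A).encard := by
        rw [depth, depth, ← Set.ncard_sdiff hsub (hfin.subset hsub),
          hfin.sdiff.cast_ncard_eq]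
    _ ≤ _ := Set.encard_le_encard (hR.ancestors_diff_subset hJne hA hJA.subset)

def depthClass (R : Set (Set Ω)) (M i : ℕ) : Set (Set Ω) := {X | X ∈ R ∧ depth R X % M = i}

lemma disjoint_depthClass {M i j : ℕ} (hij : i ≠ j) :
    Disjoint (depthClass R M i) (depthClass R M j) :=
  Set.disjoint_left.2 fun _ hi hj => hij (hi.2.symm.trans hj.2)

lemma iUnion_depthClass {M : ℕ} (hM : M ≠ 0) : ⋃ i ∈ Finset.range M, depthClass R M i = R := by
  ext X
  simp only [Set.mem_iUnion, Finset.mem_range, depthClass, exists_prop]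
  exact ⟨fun ⟨_, _, hX, _⟩ => hX, fun hX => ⟨_, Nat.mod_lt _ (Nat.pos_of_ne_zero hM), hX, rfl⟩⟩

end Nested

section Measure

variable {Ω : Type*} [MeasurableSpace Ω] {P : Measure Ω} {R : Set (Set Ω)}

lemma tsum_le_carleson_mul {A : Set Ω} (hA : A ∈ R) (hA₀ : P A ≠ 0) (hA_top : P A ≠ ∞) :
    ∑' J : {J : Set Ω // J ∈ R ∧ J ⊆ A}, P J ≤ carleson P R * P A := by
  have h : (P A)⁻¹ * ∑' J : {J : Set Ω // J ∈ R ∧ J ⊆ A}, P J ≤ carleson P R :=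
    le_iSup₂ (f := fun I (_ : I ∈ R) => (P I)⁻¹ * ∑' J : {J : Set Ω // J ∈ R ∧ J ⊆ I}, P J) A hA
  rwa [ENNReal.inv_mul_le_iff hA₀ hA_top, mul_comm] at h

lemma sum_le_carleson_mul {A : Set Ω} (hA : A ∈ R) (hA₀ : P A ≠ 0) (hA_top : P A ≠ ∞)
    (t : Finset (Set Ω)) (ht : ∀ B ∈ t, B ∈ R ∧ B ⊆ A) :
    ∑ B ∈ t, P B ≤ carleson P R * P A := by
  calc ∑ B ∈ t, P B = ∑' B : (t : Set (Set Ω)), P B := (Finset.tsum_subtype t P).symm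
    _ ≤ ∑' B : {B | B ∈ R ∧ B ⊆ A}, P B := ENNReal.tsum_mono_subtype P ht
    _ ≤ carleson P R * P A := tsum_le_carleson_mul hA hA₀ hA_top

-- Double counting: each `J ∈ G` is counted once for each of its `n` or more supersets in `T`,
-- while the members of `G` inside a fixed `B` are disjoint, so they weigh at most `P B`.
lemma mul_tsum_le_tsum_of_le_encard {G T : Set (Set Ω)} (hmeas : ∀ J ∈ G, MeasurableSet J)
    (hdisj : G.PairwiseDisjoint id) {n : ℕ∞} (hn : ∀ J ∈ G, n ≤ {B | B ∈ T ∧ J ⊆ B}.encard) :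
    (n : ℝ≥0∞) * ∑' J : G, P J ≤ ∑' B : T, P B := by
  classical
  have hcover (J : Set Ω) (hJ : J ∈ G) :
      (n : ℝ≥0∞) * P J ≤ ∑' B : T, if J ⊆ B then P J else 0 := by
    calc (n : ℝ≥0∞) * P J ≤ {B | B ∈ T ∧ J ⊆ B}.encard * P J := by gcongr; exact hn J hJ
      _ = ∑' B : {B | B ∈ T ∧ J ⊆ B}, P J := (ENNReal.tsum_set_const _ _).symm
      _ = ∑' B : T, if J ⊆ B then P J else 0 := by
        rw [tsum_subtype {B | B ∈ T ∧ J ⊆ B} fun _ => P J,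
          tsum_subtype T fun B => if J ⊆ B then P J else 0]
        congr 1 with B
        by_cases hB : B ∈ T <;> by_cases hJB : J ⊆ B <;> simp [Set.indicator, hB, hJB]
  have hpack (B : Set Ω) : ∑' J : G, (if (J : Set Ω) ⊆ B then P J else 0) ≤ P B := by
    calc ∑' J : G, (if (J : Set Ω) ⊆ B then P J else 0) = ∑' J : {J | J ∈ G ∧ J ⊆ B}, P J := by
          rw [tsum_subtype G fun J => if J ⊆ B then P J else 0, tsum_subtype _ P]
          congr 1 with J
          by_cases hJ : J ∈ G <;> by_cases hJB : J ⊆ B <;> simp [Set.indicator, hJ, hJB]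
      _ ≤ P (⋃ J : {J | J ∈ G ∧ J ⊆ B}, J) :=
          tsum_meas_le_meas_iUnion_of_disjoint P (fun J => hmeas J J.2.1)
            fun J J' h => hdisj J.2.1 J'.2.1 (Subtype.coe_injective.ne h)
      _ ≤ P B := measure_mono (Set.iUnion_subset fun J => J.2.2)
  calc (n : ℝ≥0∞) * ∑' J : G, P J = ∑' J : G, (n : ℝ≥0∞) * P J := ENNReal.tsum_mul_left.symm
    _ ≤ ∑' J : G, ∑' B : T, if (J : Set Ω) ⊆ B then P J else 0 :=
        ENNReal.tsum_le_tsum fun J => hcover J J.2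
    _ = ∑' B : T, ∑' J : G, if (J : Set Ω) ⊆ B then P J else 0 := ENNReal.tsum_comm
    _ ≤ ∑' B : T, P B := ENNReal.tsum_le_tsum fun B => hpack B

lemma Nested.finite_ancestors [IsFiniteMeasure P] (hR : Nested R) (hfin : carleson P R ≠ ∞)
    {X : Set Ω} (hX : 0 < P X) : (ancestors R X).Finite := by
  by_contra hinf
  obtain ⟨n, hn⟩ : ∃ n : ℕ, carleson P R * P Set.univ < n * P X :=
    ENNReal.exists_nat_mul_gt hX.ne' (mul_ne_top hfin (measure_ne_top P _))
  obtain ⟨t, hts, htcard⟩ := Set.Infinite.exists_subset_card_eq hinf (n + 1)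
  obtain ⟨Bₘ, hBₘ, hmax⟩ := hR.exists_forall_subset (nonempty_of_measure_ne_zero hX.ne')
    (Finset.card_pos.1 (by omega)) hts
  have hBₘ₀ : P Bₘ ≠ 0 := (hX.trans_le (measure_mono (hts hBₘ).2)).ne'
  refine hn.not_ge ?_
  calc (n : ℝ≥0∞) * P X ≤ ∑ _B ∈ t, P X := by
        rw [Finset.sum_const, htcard, nsmul_eq_mul]; gcongr; exact_mod_cast n.le_succ
    _ ≤ ∑ B ∈ t, P B := Finset.sum_le_sum fun B hB => measure_mono (hts hB).2
    _ ≤ carleson P R * P Bₘ := sum_le_carleson_mul (hts hBₘ).1 hBₘ₀ (measure_ne_top P _) t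
        fun B hB => ⟨(hts hB).1, hmax B hB⟩
    _ ≤ carleson P R * P Set.univ := by gcongr; exact Set.subset_univ _

lemma natCast_mul_tsum_G1_depthClass_le [IsFiniteMeasure P] (hmeas : ∀ A ∈ R, MeasurableSet A)
    (hpos : ∀ A ∈ R, 0 < P A) (hR : Nested R) (hfin : carleson P R ≠ ∞) {M i : ℕ} {A : Set Ω}
    (hA : A ∈ depthClass R M i) :
    (M : ℝ≥0∞) * ∑' J : G1 (depthClass R M i) A, P J ≤ carleson P R * P A := by
  have hsub : depthClass R M i ⊆ R := fun X hX => hX.1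
  calc (M : ℝ≥0∞) * ∑' J : G1 (depthClass R M i) A, P J
      ≤ ∑' B : {B | B ∈ R ∧ B ⊆ A}, P B :=
        mul_tsum_le_tsum_of_le_encard (fun J hJ => hmeas J (hsub hJ.1))
          ((hR.mono hsub).pairwiseDisjoint_G1 A) fun J hJ =>
            hR.le_encard_of_depth_modEq (hsub hJ.1)
              (nonempty_of_measure_ne_zero (hpos J (hsub hJ.1)).ne') hA.1 hJ.2.1
              (hR.finite_ancestors hfin (hpos J (hsub hJ.1))) (hJ.1.2.trans hA.2.symm)
    _ ≤ carleson P R * P A := tsum_le_carleson_mul hA.1 (hpos A hA.1).ne' (measure_ne_top P A)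

end Measure

lemma le_div_two_of_natCast_mul_le {x y Λ : ℝ≥0∞} {M : ℕ} (hM : M ≠ 0) (hΛ : 2 * Λ ≤ M)
    (h : M * x ≤ Λ * y) : x ≤ y / 2 := by
  rw [ENNReal.le_div_iff_mul_le (Or.inl two_ne_zero) (Or.inl ofNat_ne_top)]
  refine (ENNReal.mul_le_mul_iff_right (Nat.cast_ne_zero.2 hM) (natCast_ne_top M)).1 ?_
  calc (M : ℝ≥0∞) * (x * 2) = 2 * (M * x) := by ring
    _ ≤ 2 * (Λ * y) := by gcongr
    _ = 2 * Λ * y := by ring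
    _ ≤ M * y := by gcongr

lemma two_mul_le_floor_four_mul_add_one {Λ : ℝ≥0∞} (hΛ : Λ ≠ ∞) :
    2 * Λ ≤ (⌊4 * Λ.toReal + 1⌋₊ : ℝ≥0∞) := by
  have hlt := Nat.lt_floor_add_one (4 * Λ.toReal + 1)
  calc 2 * Λ = ENNReal.ofReal (2 * Λ.toReal) := by
        rw [ofReal_mul zero_le_two, ofReal_ofNat, ofReal_toReal hΛ]
    _ ≤ ENNReal.ofReal ⌊4 * Λ.toReal + 1⌋₊ :=
        ofReal_le_ofReal (by linarith [toReal_nonneg (a := Λ)])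
    _ = ⌊4 * Λ.toReal + 1⌋₊ := ofReal_natCast _

end Paper

open MeasureTheory ENNReal in
/-- Carleson–Garnett disjointification. -/
theorem statement_9 {Ω : Type*} [m0 : MeasurableSpace Ω] (P : Measure Ω)
    [IsProbabilityMeasure P]
    (R : Set (Set Ω)) (hmeas : ∀ A ∈ R, MeasurableSet A) (hpos : ∀ A ∈ R, 0 < P A)
    (hnest : Paper.Nested R) (hfin : Paper.carleson P R ≠ ⊤) :
    ∃ Rs : ℕ → Set (Set Ω),
      (∀ i j, i ≠ j → Disjoint (Rs i) (Rs j)) ∧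
      R = ⋃ i ∈ Finset.range ⌊4 * (Paper.carleson P R).toReal + 1⌋₊, Rs i ∧
      (∀ i, ∀ A ∈ Rs i, ∑' J : Paper.G1 (Rs i) A, P (J : Set Ω) ≤ P A / 2) := by
  set M := ⌊4 * (Paper.carleson P R).toReal + 1⌋₊
  have hM : M ≠ 0 := (Nat.floor_pos.2 (by linarith [toReal_nonneg (a := Paper.carleson P R)])).ne'
  refine ⟨Paper.depthClass R M, fun i j hij => Paper.disjoint_depthClass hij,
    (Paper.iUnion_depthClass hM).symm, fun i A hA => ?_⟩
  exact Paper.le_div_two_of_natCast_mul_le hM (Paper.two_mul_le_floor_four_mul_add_one hfin)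
    (Paper.natCast_mul_tsum_G1_depthClass_le hmeas hpos hnest hfin hA)
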